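/- Let Comma F G be abelian as in the main theorem (A, B, C abelian, F right exact, G left exact). If a morphism (f,g) in Comma F G is a monomorphism, then f is a monomorphism in A and g is a monomorphism in B. -/

import Mathlib

open CategoryTheory CategoryTheory.Limits

namespace CategoryTheory.Comma

variable {J : Type*} [Category J] {A B T : Type*} [Category A] [Category B] [Category T]
  {L : A ⥤ T} {R : B ⥤ T}

instance preservesLimitsOfShape_fst [HasLimitsOfShape J A] [HasLimitsOfShape J B]
    [PreservesLimitsOfShape J R] : PreservesLimitsOfShape J (Comma.fst L R) where
  preservesLimit :=
    preservesLimit_of_preserves_limit_cone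
      (coneOfPreservesIsLimit _ (limit.isLimit _) (limit.isLimit _)) (limit.isLimit _)

instance preservesLimitsOfShape_snd [HasLimitsOfShape J A] [HasLimitsOfShape J B]
    [PreservesLimitsOfShape J R] : PreservesLimitsOfShape J (Comma.snd L R) where
  preservesLimit :=
    preservesLimit_of_preserves_limit_cone
      (coneOfPreservesIsLimit _ (limit.isLimit _) (limit.isLimit _)) (limit.isLimit _)

end CategoryTheory.Comma

theorem comma_mono_components_general {A B C : Type*} [Category A] [Category B] [Category C]
    [Abelian A] [Abelian B]
    (F : A ⥤ C) (G : B ⥤ C) [PreservesFiniteLimits G]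
    {X Y : Comma F G} (φ : X ⟶ Y) (hφ : Mono φ) :
    Mono φ.left ∧ Mono φ.right :=
  -- the projections preserve pullbacks, hence monomorphisms
  ⟨(Comma.fst F G).map_mono φ, (Comma.snd F G).map_mono φ⟩

/-- With `A`, `B`, `C` abelian, `F : A ⥤ C` right exact and `G : B ⥤ C` left exact
(so that `Comma F G` is abelian), if a morphism `(f, g)` of `Comma F G` is a
monomorphism, then `f` is a monomorphism in `A` and `g` is a monomorphism in `B`. -/
theorem comma_mono_components {A B C : Type*} [Category A] [Category B] [Category C]
    [Abelian A] [Abelian B] [Abelian C]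
    (F : A ⥤ C) [PreservesFiniteColimits F] (G : B ⥤ C) [PreservesFiniteLimits G]
    {X Y : Comma F G} (φ : X ⟶ Y) (hφ : Mono φ) :
    Mono φ.left ∧ Mono φ.right :=
  comma_mono_components_general F G φ hφ
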